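/- arXiv:1509.01384 — 3 statements merged into one kernel-verified Lean document; each statement's English description precedes it below -/
import Mathlib

section
/- Let f : [a,b] → ℝ be twice continuously differentiable. Then the error of the one-step trapezoidal rule satisfies |∫_a^b f(x) dx − (b−a)/2 · (f(a) + f(b))| ≤ (b−a)³/12 · sup_{x ∈ [a,b]} |f''(x)|. -/
/-!
Integrating by parts twice against the kernel `(x - a) * (b - x)`, which vanishes at both
endpoints and has second derivative `-2`, turns the trapezoidal error into
`-½ ∫ (x - a) (b - x) f''(x) dx`. The kernel is nonnegative with integral `(b - a)³ / 6`,
so bounding `|f''|` by its supremum gives the constant `1 / 12`.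
-/

open MeasureTheory Set intervalIntegral

theorem ContDiffOn.hasDerivWithinAt_iteratedDerivWithin {𝕜 F : Type*} [NontriviallyNormedField 𝕜]
    [NormedAddCommGroup F] [NormedSpace 𝕜 F] {n : WithTop ℕ∞} {m : ℕ} {f : 𝕜 → F} {s : Set 𝕜}
    {x : 𝕜} (h : ContDiffOn 𝕜 n f s) (hmn : m < n) (hs : UniqueDiffOn 𝕜 s) (hx : x ∈ s) :
    HasDerivWithinAt (iteratedDerivWithin m f s) (iteratedDerivWithin (m + 1) f s x) s x := by
  rw [iteratedDerivWithin_succ]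
  exact (h.differentiableOn_iteratedDerivWithin hmn hs x hx).hasDerivWithinAt

theorem IsCompact.le_ciSup_of_continuousOn {X : Type*} [TopologicalSpace X] {s : Set X}
    (hs : IsCompact s) {g : X → ℝ} (hg : ContinuousOn g s) {x : X} (hx : x ∈ s) :
    g x ≤ ⨆ y : s, g y := by
  refine le_ciSup (f := fun y : s => g y) ?_ ⟨x, hx⟩
  simpa only [image_eq_range] using hs.bddAbove_image hg

theorem integral_sub_mul_sub (a b : ℝ) : ∫ x in a..b, (x - a) * (b - x) = (b - a) ^ 3 / 6 := by
  have hF (x : ℝ) : HasDerivAt (fun y => (b - a) * (y - a) ^ 2 / 2 - (y - a) ^ 3 / 3)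
      ((x - a) * (b - x)) x := by
    refine ((((hasDerivAt_id' x).sub_const a).fun_pow 2).const_mul (b - a) |>.div_const 2).fun_sub
      ((((hasDerivAt_id' x).sub_const a).fun_pow 3).div_const 3) |>.congr_deriv ?_
    norm_num
    ring
  rw [integral_eq_sub_of_hasDerivAt (fun x _ => hF x)
    (Continuous.intervalIntegrable (by fun_prop) a b)]
  ring

theorem abs_integral_sub_mul_sub_mul_le {a b M : ℝ} {g : ℝ → ℝ} (hab : a ≤ b)
    (hg : ∀ x ∈ Icc a b, |g x| ≤ M) :
    |∫ x in a..b, (x - a) * (b - x) * g x| ≤ (b - a) ^ 3 / 6 * M := by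
  rw [← Real.norm_eq_abs, ← integral_sub_mul_sub, ← intervalIntegral.integral_mul_const]
  refine norm_integral_le_of_norm_le hab (ae_of_all _ fun x hx => ?_)
    (Continuous.intervalIntegrable (u := fun x => (x - a) * (b - x) * M) (by fun_prop) a b)
  have hx' := Ioc_subset_Icc_self hx
  have hkernel : 0 ≤ (x - a) * (b - x) := mul_nonneg (sub_nonneg.2 hx'.1) (sub_nonneg.2 hx'.2)
  rw [Real.norm_eq_abs, abs_mul, abs_of_nonneg hkernel]
  exact mul_le_mul_of_nonneg_left (hg x hx') hkernel

theorem integral_sub_trapezoid_eq {a b : ℝ} {f f' f'' : ℝ → ℝ}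
    (hf : ∀ x ∈ uIcc a b, HasDerivWithinAt f (f' x) (uIcc a b) x)
    (hf' : ∀ x ∈ uIcc a b, HasDerivWithinAt f' (f'' x) (uIcc a b) x)
    (hf'' : IntervalIntegrable f'' volume a b) :
    (∫ x in a..b, f x) - (b - a) / 2 * (f a + f b) =
      -(1 / 2) * ∫ x in a..b, (x - a) * (b - x) * f'' x := by
  have hkernel (x : ℝ) : HasDerivAt (fun y => (y - a) * (b - y)) (a + b - 2 * x) x := by
    refine ((hasDerivAt_id' x).sub_const a).fun_mul ((hasDerivAt_id' x).const_sub b)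
      |>.congr_deriv ?_
    ring
  have hkernel' (x : ℝ) : HasDerivAt (fun y => a + b - 2 * y) (-2) x := by
    simpa using ((hasDerivAt_id' x).const_mul 2).const_sub (a + b)
  have hf'int : IntervalIntegrable f' volume a b :=
    ContinuousOn.intervalIntegrable fun x hx => (hf' x hx).continuousWithinAt
  have hparts₁ := integral_mul_deriv_eq_deriv_mul_of_hasDerivWithinAt
    (fun x _ => (hkernel x).hasDerivWithinAt) hf'
    (Continuous.intervalIntegrable (by fun_prop) a b) hf''
  have hparts₂ := integral_mul_deriv_eq_deriv_mul_of_hasDerivWithinAt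
    (fun x _ => (hkernel' x).hasDerivWithinAt) hf intervalIntegrable_const hf'int
  rw [intervalIntegral.integral_const_mul] at hparts₂
  rw [hparts₁, hparts₂]
  ring

/-- One-step trapezoidal rule error bound: for `f` twice continuously differentiable on
`[a,b]`, `|∫_a^b f − (b−a)/2·(f a + f b)| ≤ (b−a)³/12 · sup_{x∈[a,b]} |f''(x)|`. -/
theorem trapezoid_one_step_error (a b : ℝ) (hab : a < b) (f : ℝ → ℝ)
    (hf : ContDiffOn ℝ 2 f (Set.Icc a b)) :
    |(∫ x in a..b, f x) - (b - a) / 2 * (f a + f b)| ≤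
      (b - a) ^ 3 / 12 * ⨆ x : Set.Icc a b, |iteratedDerivWithin 2 f (Set.Icc a b) x| := by
  have hs : UniqueDiffOn ℝ (Icc a b) := uniqueDiffOn_Icc hab
  have hderiv : ∀ m < 2, ∀ x ∈ uIcc a b, HasDerivWithinAt (iteratedDerivWithin m f (Icc a b))
      (iteratedDerivWithin (m + 1) f (Icc a b) x) (uIcc a b) x := by
    rw [uIcc_of_le hab.le]
    exact fun m hm x hx => hf.hasDerivWithinAt_iteratedDerivWithin (by exact_mod_cast hm) hs hx
  have hf'' : ContinuousOn (iteratedDerivWithin 2 f (Icc a b)) (Icc a b) :=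
    hf.continuousOn_iteratedDerivWithin le_rfl hs
  have hpeano := integral_sub_trapezoid_eq (by simpa using hderiv 0 two_pos) (hderiv 1 one_lt_two)
    (hf''.intervalIntegrable_of_Icc hab.le)
  have hsup : ∀ x ∈ Icc a b, |iteratedDerivWithin 2 f (Icc a b) x| ≤
      ⨆ x : Icc a b, |iteratedDerivWithin 2 f (Icc a b) x| :=
    fun x hx => isCompact_Icc.le_ciSup_of_continuousOn hf''.abs hx
  rw [hpeano, abs_mul, abs_neg, abs_of_pos one_half_pos]
  linarith [abs_integral_sub_mul_sub_mul_le hab.le hsup]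
end

section
/- For the composite trapezoidal rule on an equidistant grid with n subintervals of [a,b], the error satisfies |∫_a^b f(x) dx − (b−a)/(2n) · [f(a) + 2 Σ_{i=1}^{n−1} f(a + i(b−a)/n) + f(b)]| ≤ (b−a)³/(12 n²) · sup_{x∈[a,b]} |f''(x)|. -/
open MeasureTheory Set intervalIntegral Finset

lemma trapezoidal_integral_eq_sum_Ico (f : ℝ → ℝ) (n : ℕ) (a b : ℝ) :
    trapezoidal_integral f n a b =
      (b - a) / (2 * n) * (f a + 2 * ∑ i ∈ Ico 1 n, f (a + i * (b - a) / n) + f b) := by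
  rw [trapezoidal_integral, sum_Ico_eq_sum_range]
  simp only [Nat.cast_add, Nat.cast_one, add_comm (1 : ℝ)]
  ring

lemma IsCompact.abs_le_iSup_abs {X : Type*} [TopologicalSpace X] {s : Set X} (hs : IsCompact s)
    {g : X → ℝ} (hg : ContinuousOn g s) {x : X} (hx : x ∈ s) :
    |g x| ≤ ⨆ y : s, |g y| := by
  have hbdd : BddAbove (range fun y : s => |g y|) := by
    simpa only [image_eq_range] using hs.bddAbove_image hg.abs
  exact le_ciSup hbdd ⟨x, hx⟩

lemma iteratedDerivWithin_succ_eq_zero_of_notMem_closure {𝕜 F : Type*}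
    [NontriviallyNormedField 𝕜] [NormedAddCommGroup F] [NormedSpace 𝕜 F]
    {f : 𝕜 → F} {s : Set 𝕜} {x : 𝕜} (hx : x ∉ closure s) (n : ℕ) :
    iteratedDerivWithin (n + 1) f s x = 0 := by
  rw [iteratedDerivWithin_succ, derivWithin_zero_of_notMem_closure hx]

/-- Off `s` the derivative within `s` vanishes, so the supremum over `s` bounds it everywhere. -/
lemma abs_iteratedDerivWithin_succ_le_iSup {f : ℝ → ℝ} {s : Set ℝ} (hs : IsCompact s)
    (hs' : UniqueDiffOn ℝ s) (hne : s.Nonempty) {n : ℕ} (hf : ContDiffOn ℝ (n + 1) f s)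
    (x : ℝ) :
    |iteratedDerivWithin (n + 1) f s x| ≤ ⨆ y : s, |iteratedDerivWithin (n + 1) f s y| := by
  have hcont := hf.continuousOn_iteratedDerivWithin le_rfl hs'
  by_cases hx : x ∈ s
  · exact hs.abs_le_iSup_abs hcont hx
  · obtain ⟨y, hy⟩ := hne
    rw [iteratedDerivWithin_succ_eq_zero_of_notMem_closure (by rwa [hs.isClosed.closure_eq]),
      abs_zero]
    exact (abs_nonneg _).trans (hs.abs_le_iSup_abs hcont hy)

/-- Composite trapezoidal rule error on an equidistant grid with `n` subintervals:
`|∫_a^b f − (b−a)/(2n)·[f a + 2 Σ_{i=1}^{n−1} f(a + i(b−a)/n) + f b]|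
  ≤ (b−a)³/(12 n²) · sup_{x∈[a,b]} |f''|`. -/
theorem trapezoid_composite_equidistant_error (a b : ℝ) (hab : a < b) (n : ℕ) (hn : 1 ≤ n)
    (f : ℝ → ℝ) (hf : ContDiffOn ℝ 2 f (Set.Icc a b)) :
    |(∫ x in a..b, f x) -
        (b - a) / (2 * n) *
          (f a + 2 * ∑ i ∈ Finset.Ico 1 n, f (a + i * (b - a) / n) + f b)| ≤
      (b - a) ^ 3 / (12 * n ^ 2) *
        ⨆ x : Set.Icc a b, |iteratedDerivWithin 2 f (Set.Icc a b) x| := by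
  have hbound := abs_iteratedDerivWithin_succ_le_iSup (n := 1) isCompact_Icc
    (uniqueDiffOn_Icc hab) (nonempty_Icc.2 hab.le) hf
  rw [← uIcc_of_le hab.le] at hf hbound
  have herr := trapezoidal_error_le_of_c2 hf hbound hn
  rw [trapezoidal_error, trapezoidal_integral_eq_sum_Ico, abs_sub_comm, uIcc_of_le hab.le,
    abs_of_pos (sub_pos.2 hab)] at herr
  exact herr.trans_eq (by ring)
end

section
/- Let A be a p×p real matrix all of whose eigenvalues have strictly negative real parts. Then there exist positive constants α and β such that ‖exp(A t)‖ ≤ β · exp(−α t) for all t ≥ 0. -/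
/-!
An eigenvector of `A` inside an eigenspace of the commuting matrix `exp A` shows that every
eigenvalue of `exp A` is `e^μ` for an eigenvalue `μ` of `A`; hence the spectral radius of
`exp A` is `< 1`. Gelfand's formula then gives `‖(exp A)ⁿ‖ ≤ C rⁿ` for some `r < 1`, and
writing `t = ⌊t⌋ + s` with `s ∈ [0, 1)` turns this into
`‖exp (t A)‖ ≤ β r^t = β e^{-α t}` with `α = -log r`. The spectrum lives over `ℂ`, but
complexification preserves the `L^∞` operator norm, so nothing is lost in passing to the
complex matrix.
-/

open Matrix

attribute [local instance] Matrix.linftyOpNormedAddCommGroup Matrix.linftyOpNormedRing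

attribute [local instance] Matrix.linftyOpNormedAlgebra

open NormedSpace Filter
open scoped NNReal ENNReal

theorem exists_norm_pow_le_mul_pow_of_spectralRadius_lt {A : Type*} [NormedRing A]
    [NormedAlgebra ℂ A] [CompleteSpace A] {a : A} {r : ℝ≥0} (h : spectralRadius ℂ a < r) :
    ∃ C : ℝ, ∀ n : ℕ, ‖a ^ n‖ ≤ C * r ^ n := by
  have hr : (0 : ℝ) < r := ENNReal.coe_pos.mp (pos_of_gt h)
  have hev : ∀ᶠ n : ℕ in atTop, ‖a ^ n‖ / r ^ n ≤ 1 := by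
    filter_upwards [(spectrum.gelfand_formula a).eventually_lt_const h, eventually_gt_atTop 0]
      with n hn hn0
    rw [one_div, ENNReal.rpow_inv_lt_iff (by positivity), ENNReal.rpow_natCast] at hn
    rw [div_le_one (by positivity)]
    exact_mod_cast hn.le
  obtain ⟨C, hC⟩ :=
    IsBoundedUnder.bddAbove_range (f := fun n => ‖a ^ n‖ / r ^ n) ⟨1, hev⟩
  exact ⟨C, fun n => (div_le_iff₀ (by positivity)).mp (hC ⟨n, rfl⟩)⟩

theorem exists_norm_exp_smul_le_of_norm_exp_pow_le {A : Type*} [NormedRing A]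
    [NormedAlgebra ℝ A] [CompleteSpace A] {a : A} {C r : ℝ} (hr0 : 0 < r) (hr1 : r ≤ 1)
    (hC : ∀ n : ℕ, ‖exp a ^ n‖ ≤ C * r ^ n) :
    ∃ β > 0, ∀ t : ℝ, 0 ≤ t → ‖exp (t • a)‖ ≤ β * r ^ t := by
  let +nondep : NormedAlgebra ℚ A := .restrictScalars ℚ ℝ A
  have hcont : Continuous fun s : ℝ => exp (s • a) :=
    exp_continuous.comp (continuous_id.smul continuous_const)
  obtain ⟨M, hM⟩ := (isCompact_Icc (a := (0 : ℝ)) (b := 1)).exists_bound_of_continuousOn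
    hcont.continuousOn
  have hM0 : 0 ≤ M := (norm_nonneg _).trans (hM 0 ⟨le_rfl, zero_le_one⟩)
  have hC0 : 0 ≤ C := by simpa using (norm_nonneg _).trans (hC 0)
  refine ⟨max (M * C / r) 1, by positivity, fun t ht => ?_⟩
  set n := ⌊t⌋₊
  have hexp : exp (t • a) = exp ((t - n) • a) * exp a ^ n := by
    rw [← NormedSpace.exp_nsmul, ← Nat.cast_smul_eq_nsmul ℝ,
      ← NormedSpace.exp_add_of_commute (((Commute.refl a).smul_left _).smul_right _),
      ← add_smul, sub_add_cancel]
  have hpow : r ^ n ≤ r ^ t / r := by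
    rw [← Real.rpow_natCast, ← Real.rpow_sub_one hr0.ne']
    exact Real.rpow_le_rpow_of_exponent_ge hr0 hr1 (by linarith [Nat.lt_floor_add_one t])
  calc ‖exp (t • a)‖
    _ ≤ ‖exp ((t - n) • a)‖ * ‖exp a ^ n‖ := hexp ▸ norm_mul_le _ _
    _ ≤ M * (C * (r ^ t / r)) := by
      gcongr
      · exact hM _ ⟨sub_nonneg.mpr (Nat.floor_le ht), by linarith [Nat.lt_floor_add_one t]⟩
      · exact (hC n).trans (by gcongr)
    _ = M * C / r * r ^ t := by ring
    _ ≤ max (M * C / r) 1 * r ^ t := by gcongr; exact le_max_left _ _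

namespace Matrix

variable {n : Type*} [Fintype n]

theorem linfty_opNorm_map_eq {m α β : Type*} [Fintype m] [NormedAddCommGroup α]
    [NormedAddCommGroup β] (M : Matrix m n α) (f : α → β)
    (hf : ∀ a, ‖f a‖₊ = ‖a‖₊) : ‖M.map f‖ = ‖M‖ := by
  simp only [linfty_opNorm_def, map_apply, hf]

variable [DecidableEq n]

theorem map_ofReal_exp (M : Matrix n n ℝ) :
    (exp M).map Complex.ofReal = exp (M.map Complex.ofReal) :=
  map_exp Complex.ofRealHom.mapMatrix (continuous_id.matrix_map Complex.continuous_ofReal) M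

theorem pow_mulVec_of_mulVec_eq_smul {R : Type*} [CommSemiring R] {B : Matrix n n R} {μ : R}
    {v : n → R} (hv : B *ᵥ v = μ • v) (k : ℕ) : (B ^ k) *ᵥ v = μ ^ k • v := by
  induction k with
  | zero => simp
  | succ k ih => rw [pow_succ, ← mulVec_mulVec, hv, mulVec_smul, ih, smul_smul, pow_succ']

theorem exp_mulVec_of_mulVec_eq_smul {𝕂 : Type*} [RCLike 𝕂] {B : Matrix n n 𝕂} {μ : 𝕂}
    {v : n → 𝕂} (hv : B *ᵥ v = μ • v) : exp B *ᵥ v = exp μ • v := by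
  let evalAt : Matrix n n 𝕂 →L[𝕂] (n → 𝕂) :=
    LinearMap.toContinuousLinearMap (LinearMap.applyₗ v ∘ₗ Matrix.toLin'.toLinearMap)
  have hB := (exp_series_hasSum_exp' (𝕂 := 𝕂) B).mapL evalAt
  have hμ := (exp_series_hasSum_exp' (𝕂 := 𝕂) μ).smul_const v
  refine hB.unique ?_
  convert hμ using 2 with k
  change ((k.factorial⁻¹ : 𝕂) • B ^ k) *ᵥ v = _
  rw [smul_mulVec, pow_mulVec_of_mulVec_eq_smul hv, smul_smul, smul_eq_mul]

open Module.End in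
theorem spectrum_exp_subset_exp_image (B : Matrix n n ℂ) :
    spectrum ℂ (exp B) ⊆ Complex.exp '' spectrum ℂ B := by
  intro l hl
  have hE : HasEigenvalue (toLin' (exp B)) l := by
    rwa [hasEigenvalue_iff_mem_spectrum, spectrum_toLin']
  have hmaps : Set.MapsTo (toLin' B) (eigenspace (toLin' (exp B)) l)
      (eigenspace (toLin' (exp B)) l) :=
    mapsTo_genEigenspace_of_comm ((Commute.refl B).exp_right.map toLinAlgEquiv').symm l 1
  have : Nontrivial (eigenspace (toLin' (exp B)) l) := Submodule.nontrivial_iff_ne_bot.mpr hE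
  obtain ⟨μ, hμ⟩ := exists_eigenvalue ((toLin' B).restrict hmaps)
  obtain ⟨w, hw⟩ := hμ.exists_hasEigenvector
  have hBw : B *ᵥ (w : n → ℂ) = μ • w := congrArg Subtype.val hw.apply_eq_smul
  have hw0 : (w : n → ℂ) ≠ 0 := by simpa using hw.2
  refine ⟨μ, ?_, smul_left_injective ℂ hw0 ?_⟩
  · rw [← spectrum_toLin', ← hasEigenvalue_iff_mem_spectrum]
    exact hasEigenvalue_of_hasEigenvector ⟨mem_eigenspace_iff.mpr hBw, hw0⟩
  · change Complex.exp μ • (w : n → ℂ) = l • w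
    rw [Complex.exp_eq_exp_ℂ, ← exp_mulVec_of_mulVec_eq_smul hBw]
    exact mem_eigenspace_iff.mp w.2

theorem spectralRadius_exp_lt_one {B : Matrix n n ℂ} (hB : ∀ μ ∈ spectrum ℂ B, μ.re < 0) :
    spectralRadius ℂ (exp B) < 1 := by
  rcases (spectrum ℂ (exp B)).eq_empty_or_nonempty with h | h
  · simp [spectralRadius, h]
  · rw [← ENNReal.coe_one]
    refine spectrum.spectralRadius_lt_of_forall_lt_of_nonempty h fun l hl => ?_
    obtain ⟨μ, hμ, rfl⟩ := spectrum_exp_subset_exp_image B hl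
    rw [← NNReal.coe_lt_coe, coe_nnnorm, Complex.norm_exp, NNReal.coe_one, Real.exp_lt_one_iff]
    exact hB μ hμ

end Matrix

/-- If all (complex) eigenvalues of the real matrix `A` have strictly negative real part
(Hurwitz matrix), then there are positive constants `α, β` with
`‖exp (t • A)‖ ≤ β · exp (−α t)` for all `t ≥ 0`. -/
theorem hurwitz_matrix_exp_decay (p : ℕ) (A : Matrix (Fin p) (Fin p) ℝ)
    (hA : ∀ μ ∈ spectrum ℂ (A.map (Complex.ofReal)), μ.re < 0) :
    ∃ α β : ℝ, 0 < α ∧ 0 < β ∧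
      ∀ t : ℝ, 0 ≤ t → ‖NormedSpace.exp (t • A)‖ ≤ β * Real.exp (-α * t) := by
  obtain ⟨r, hρr, hr⟩ := ENNReal.lt_iff_exists_nnreal_btwn.mp (spectralRadius_exp_lt_one hA)
  have hr0 : (0 : ℝ) < r := ENNReal.coe_pos.mp (pos_of_gt hρr)
  have hr1 : (r : ℝ) < 1 := by exact_mod_cast hr
  obtain ⟨C, hC⟩ := exists_norm_pow_le_mul_pow_of_spectralRadius_lt hρr
  have hCA (k : ℕ) : ‖exp A ^ k‖ ≤ C * r ^ k :=
    calc ‖exp A ^ k‖ = ‖(exp A ^ k).map Complex.ofReal‖ :=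
          (linfty_opNorm_map_eq _ _ Complex.nnnorm_real).symm
      _ = ‖exp (A.map Complex.ofReal) ^ k‖ := by
          rw [← map_ofReal_exp]; exact congrArg norm (Matrix.map_pow _ Complex.ofRealHom k)
      _ ≤ C * r ^ k := hC k
  obtain ⟨β, hβ, hbound⟩ := exists_norm_exp_smul_le_of_norm_exp_pow_le hr0 hr1.le hCA
  refine ⟨-Real.log r, β, neg_pos.mpr (Real.log_neg hr0 hr1), hβ, fun t ht => ?_⟩
  rw [neg_neg, ← Real.rpow_def_of_pos hr0]
  exact hbound t ht
end
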